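/- Every 2-plane through the origin in Im ℍ is the image under the Hopf map z ↦ z̄ i z of some Levi-Civita plane: given orthonormal e₁, e₂ ∈ Im ℍ, there is a unit quaternion x with e₁ = x̄ i x, and then y = −i x e₂ is a unit quaternion with e₂ = x̄ i y, Re{x̄ i y} = 0 and ⟨x,y⟩ = 0, so span(x,y) is a Levi-Civita plane mapping onto span(e₁,e₂). -/

import Mathlib

/-- The quaternion unit `i`. -/
def qi : Quaternion ℝ := ⟨0,1,0,0⟩

/-- The Hopf map z ↦ z̄ i z. -/
noncomputable def hopf (z : Quaternion ℝ) : Quaternion ℝ := star z * qi * z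

/-!
Let `hopf x = e₁` with `x` a unit, and put `g = e₂ e₁`, `y = x g`. Since `g` is a unit imaginary
quaternion anticommuting with `e₁`, for `w = a + b g` we get
`hopf (x w) = w̄ e₁ w = w̄² e₁ = (a² - b²) e₁ + 2ab e₂`: on `span {x, y}` the Hopf map is the
squaring map of the complex line `ℝ ⊕ ℝ g`, which is onto.
-/

open Quaternion Submodule

theorem Real.exists_sq_sub_sq_and_two_mul_eq (c d : ℝ) :
    ∃ a b : ℝ, a ^ 2 - b ^ 2 = c ∧ 2 * a * b = d := by
  obtain ⟨z, hz⟩ := IsAlgClosed.exists_pow_nat_eq (⟨c, d⟩ : ℂ) two_pos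
  have hre := congrArg Complex.re hz
  have him := congrArg Complex.im hz
  simp only [sq, Complex.mul_re, Complex.mul_im] at hre him
  exact ⟨z.re, z.im, by linarith, by linarith⟩

namespace Quaternion

variable {u v x e g : ℍ[ℝ]}

theorem norm_eq_one_of_normSq_eq_one (h : normSq x = 1) : ‖x‖ = 1 := by
  rwa [← pow_eq_one_iff_of_nonneg (norm_nonneg x) two_ne_zero, sq, ← normSq_eq_norm_mul_self]

theorem star_mul_self_of_norm_eq_one (hx : ‖x‖ = 1) : star x * x = 1 := by
  rw [star_mul_self, normSq_eq_norm_mul_self, hx, mul_one, coe_one]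

theorem self_mul_star_of_norm_eq_one (hx : ‖x‖ = 1) : x * star x = 1 := by
  rw [self_mul_star, normSq_eq_norm_mul_self, hx, mul_one, coe_one]

theorem mul_self_eq_neg_one_of_re_eq_zero (hu : u.re = 0) (hn : ‖u‖ = 1) : u * u = -1 := by
  rw [← neg_neg (u * u), ← neg_mul, ← star_eq_neg.2 hu, star_mul_self_of_norm_eq_one hn]

theorem re_mul_of_re_eq_zero (hu : u.re = 0) : (u * v).re = -(star u * v).re := by
  rw [star_eq_neg.2 hu, neg_mul, re_neg, neg_neg]

theorem mul_eq_neg_mul_of_re_mul_eq_zero (hu : u.re = 0) (hv : v.re = 0)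
    (h : (u * v).re = 0) : v * u = -(u * v) := by
  have h2 := star_add_self (u * v)
  rw [h, star_mul, star_eq_neg.2 hu, star_eq_neg.2 hv, neg_mul_neg, coe_zero, mul_zero] at h2
  exact eq_neg_of_add_eq_zero_left h2

theorem star_mul_mul_self_of_mul_eq (hx : ‖x‖ = 1) (h : u * x = x * v) :
    star x * u * x = v := by
  rw [mul_assoc, h, ← mul_assoc, star_mul_self_of_norm_eq_one hx, one_mul]

/-- `1 - u v` intertwines `u` and `v`, and vanishes only when `v = -u`. -/
theorem exists_star_mul_mul_self_eq (hu : u.re = 0) (hun : ‖u‖ = 1) (hv : v.re = 0)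
    (hvn : ‖v‖ = 1) (hne : v ≠ -u) : ∃ x : ℍ[ℝ], ‖x‖ = 1 ∧ star x * u * x = v := by
  have hne0 : 1 - u * v ≠ 0 := by
    intro h
    apply hne
    calc v = -(u * u) * v := by rw [mul_self_eq_neg_one_of_re_eq_zero hu hun, neg_neg, one_mul]
      _ = -u := by rw [neg_mul, mul_assoc, ← sub_eq_zero.1 h, mul_one]
  have hint : u * (1 - u * v) = (1 - u * v) * v := by
    rw [mul_sub, sub_mul, mul_one, one_mul, ← mul_assoc, mul_assoc u v,
      mul_self_eq_neg_one_of_re_eq_zero hu hun, mul_self_eq_neg_one_of_re_eq_zero hv hvn]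
    noncomm_ring
  refine ⟨‖1 - u * v‖⁻¹ • (1 - u * v), norm_smul_inv_norm hne0,
    star_mul_mul_self_of_mul_eq (norm_smul_inv_norm hne0) ?_⟩
  rw [mul_smul_comm, smul_mul_assoc, hint]

theorem star_mul_mul_smul_one_add_smul (hg : g.re = 0) (hgn : ‖g‖ = 1)
    (hge : g * e = -(e * g)) (a b : ℝ) :
    star (a • 1 + b • g) * e * (a • 1 + b • g) = (a ^ 2 - b ^ 2) • e + (2 * a * b) • (e * g) := by
  have hstar : star (a • 1 + b • g) = a • 1 - b • g := by
    rw [star_add, star_smul, star_smul, star_one, star_eq_neg.2 hg, smul_neg, sub_eq_add_neg]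
  have hcomm : e * (a • 1 + b • g) = star (a • 1 + b • g) * e := by
    rw [hstar, mul_add, sub_mul, mul_smul_comm, mul_smul_comm, smul_mul_assoc, smul_mul_assoc, hge]
    simp only [mul_one, one_mul, smul_neg, sub_neg_eq_add]
  rw [mul_assoc, hcomm, ← mul_assoc, hstar]
  simp only [sub_mul, mul_sub, smul_mul_assoc, mul_smul_comm, one_mul, mul_one, smul_sub,
    mul_self_eq_neg_one_of_re_eq_zero hg hgn, hge, smul_smul, neg_one_mul]
  module

end Quaternion

theorem qi_re : qi.re = 0 := rfl

theorem norm_qi : ‖qi‖ = 1 :=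
  norm_eq_one_of_normSq_eq_one (by rw [normSq_def']; norm_num [qi])

theorem hopf_mul (x w : ℍ[ℝ]) : hopf (x * w) = star w * hopf x * w := by
  simp only [hopf, star_mul, mul_assoc]

theorem mul_hopf_of_norm_eq_one {x : ℍ[ℝ]} (hx : ‖x‖ = 1) : x * hopf x = qi * x := by
  rw [hopf, ← mul_assoc, ← mul_assoc, self_mul_star_of_norm_eq_one hx, one_mul]

/-- If `e₁ = -i`, the generic witness `1 - i e₁` vanishes; then `e₂` conjugates `i` to `-i`. -/
theorem exists_hopf_eq {e₁ e₂ : ℍ[ℝ]} (he₁ : e₁.re = 0) (hn₁ : ‖e₁‖ = 1) (hn₂ : ‖e₂‖ = 1)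
    (hanti : e₂ * e₁ = -(e₁ * e₂)) : ∃ x : ℍ[ℝ], ‖x‖ = 1 ∧ hopf x = e₁ := by
  by_cases h : e₁ = -qi
  · refine ⟨e₂, hn₂, star_mul_mul_self_of_mul_eq hn₂ ?_⟩
    rw [hanti, h, neg_mul, neg_neg]
  · exact exists_star_mul_mul_self_eq qi_re norm_qi he₁ hn₁ h

theorem image_hopf_span_pair {x g : ℍ[ℝ]} (hg : g.re = 0) (hgn : ‖g‖ = 1)
    (hge : g * hopf x = -(hopf x * g)) :
    hopf '' span ℝ {x, x * g} = span ℝ {hopf x, hopf x * g} := by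
  have hline (a b : ℝ) :
      hopf (a • x + b • (x * g)) = (a ^ 2 - b ^ 2) • hopf x + (2 * a * b) • (hopf x * g) := by
    rw [← star_mul_mul_smul_one_add_smul hg hgn hge, ← hopf_mul, mul_add, mul_smul_comm,
      mul_smul_comm, mul_one]
  ext w
  simp only [Set.mem_image, SetLike.mem_coe, mem_span_pair]
  constructor
  · rintro ⟨_, ⟨a, b, rfl⟩, rfl⟩
    exact ⟨_, _, (hline a b).symm⟩
  · rintro ⟨c, d, rfl⟩
    obtain ⟨a, b, rfl, rfl⟩ := Real.exists_sq_sub_sq_and_two_mul_eq c d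
    exact ⟨_, ⟨a, b, rfl⟩, hline a b⟩

theorem plane_is_hopf_image (e₁ e₂ : Quaternion ℝ)
    (he₁ : e₁.re = 0) (he₂ : e₂.re = 0)
    (hn₁ : ‖e₁‖ = 1) (hn₂ : ‖e₂‖ = 1) (horth : (star e₁ * e₂).re = 0) :
    ∃ x y : Quaternion ℝ,
      ‖x‖ = 1 ∧ star x * qi * x = e₁ ∧
      y = -(qi * x * e₂) ∧ ‖y‖ = 1 ∧ star x * qi * y = e₂ ∧
      (star x * qi * y).re = 0 ∧ (star x * y).re = 0 ∧
      hopf '' (Submodule.span ℝ {x, y} : Submodule ℝ (Quaternion ℝ))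
        = (Submodule.span ℝ {e₁, e₂} : Submodule ℝ (Quaternion ℝ)) := by
  have hre : (e₁ * e₂).re = 0 := by rw [re_mul_of_re_eq_zero he₁, horth, neg_zero]
  have hanti : e₂ * e₁ = -(e₁ * e₂) := mul_eq_neg_mul_of_re_mul_eq_zero he₁ he₂ hre
  have he₁₁ : e₁ * e₁ = -1 := mul_self_eq_neg_one_of_re_eq_zero he₁ hn₁
  have hg : (e₂ * e₁).re = 0 := by rw [hanti, re_neg, hre, neg_zero]
  have hgn : ‖e₂ * e₁‖ = 1 := by rw [norm_mul, hn₁, hn₂, one_mul]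
  have he₁g : e₁ * (e₂ * e₁) = e₂ := by
    rw [hanti, mul_neg, ← mul_assoc, he₁₁, neg_one_mul, neg_neg]
  have hge : e₂ * e₁ * e₁ = -(e₁ * (e₂ * e₁)) := by rw [he₁g, mul_assoc, he₁₁, mul_neg_one]
  obtain ⟨x, hx, hxe⟩ := exists_hopf_eq he₁ hn₁ hn₂ hanti
  have hy : -(qi * x * e₂) = x * (e₂ * e₁) := by
    rw [← mul_hopf_of_norm_eq_one hx, hxe, mul_assoc, hanti, mul_neg]
  have hxy : star x * qi * (x * (e₂ * e₁)) = e₂ := by rw [← mul_assoc, ← hopf, hxe, he₁g]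
  refine ⟨x, x * (e₂ * e₁), hx, hxe, hy.symm, by rw [norm_mul, hx, hgn, one_mul], hxy,
    by rwa [hxy], ?_, ?_⟩
  · rwa [← mul_assoc, star_mul_self_of_norm_eq_one hx, one_mul]
  · rw [image_hopf_span_pair hg hgn (hxe ▸ hge), hxe, he₁g]
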